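/- There is a constant C such that for every k ∈ (2πℤ)² with k ≠ 0: ∑_{k'+k''=k, with k',k'' ∈ (2πℤ)² both nonzero} d(k',0)^(-4) · d(k'',0)^(-1) ≤ C · d(k,0)^(-1), where d(k,0) = |k1| + |k2|^(2/3). -/
import Mathlib


open Real

/-- The anisotropic distance to the origin of a lattice point `k = 2πm ∈ (2πℤ)²`:
`d(k,0) = |k₁| + |k₂|^(2/3)`. -/
noncomputable def latticeDist (m : ℤ × ℤ) : ℝ :=
  |2 * π * (m.1 : ℝ)| + |2 * π * (m.2 : ℝ)| ^ ((2 : ℝ) / 3)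

namespace LatticeAux

/-- Subadditivity of `t ↦ t^(2/3)` on nonneg reals. -/
lemma rpow_two_thirds_add_le {x y : ℝ} (hx : 0 ≤ x) (hy : 0 ≤ y) :
    (x + y) ^ ((2:ℝ)/3) ≤ x ^ ((2:ℝ)/3) + y ^ ((2:ℝ)/3) := by
  have h := NNReal.rpow_add_le_add_rpow (Real.toNNReal x) (Real.toNNReal y)
    (by norm_num : (0:ℝ) ≤ 2/3) (by norm_num : (2:ℝ)/3 ≤ 1)
  have h' := (NNReal.coe_le_coe).mpr h
  rw [NNReal.coe_add, NNReal.coe_rpow, NNReal.coe_rpow, NNReal.coe_rpow, NNReal.coe_add,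
    Real.coe_toNNReal x hx, Real.coe_toNNReal y hy] at h'
  exact h' 

lemma latticeDist_nonneg (m : ℤ × ℤ) : 0 ≤ latticeDist m :=
  add_nonneg (abs_nonneg _) (Real.rpow_nonneg (abs_nonneg _) _)

lemma one_le_latticeDist {m : ℤ × ℤ} (hm : m ≠ 0) : 1 ≤ latticeDist m := by
  have hpi : (1:ℝ) ≤ 2 * π := by nlinarith [Real.pi_gt_three]
  rcases eq_or_ne m.1 0 with h1 | h1
  · have h2 : m.2 ≠ 0 := by
      intro h2; exact hm (Prod.ext h1 h2)
    have habs : (1:ℝ) ≤ |(m.2 : ℝ)| := by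
      have := Int.one_le_abs (by exact h2)
      exact_mod_cast (by exact_mod_cast this : (1:ℤ) ≤ |m.2|)
    have hb : (1:ℝ) ≤ |2 * π * (m.2 : ℝ)| := by
      rw [abs_mul]
      have : |(2 * π : ℝ)| = 2 * π := abs_of_pos (by positivity)
      rw [this]
      nlinarith
    have : (1:ℝ) ^ ((2:ℝ)/3) ≤ |2 * π * (m.2 : ℝ)| ^ ((2:ℝ)/3) :=
      Real.rpow_le_rpow (by norm_num) hb (by norm_num)
    rw [Real.one_rpow] at this
    have := add_le_add (abs_nonneg (2 * π * (m.1:ℝ))) this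
    simpa [latticeDist] using this
  · have habs : (1:ℝ) ≤ |(m.1 : ℝ)| := by
      have := Int.one_le_abs (by exact h1)
      exact_mod_cast (by exact_mod_cast this : (1:ℤ) ≤ |m.1|)
    have hb : (1:ℝ) ≤ |2 * π * (m.1 : ℝ)| := by
      rw [abs_mul]
      have : |(2 * π : ℝ)| = 2 * π := abs_of_pos (by positivity)
      rw [this]
      nlinarith
    have := add_le_add hb (Real.rpow_nonneg (abs_nonneg (2 * π * (m.2:ℝ))) ((2:ℝ)/3))
    simpa [latticeDist] using this

lemma latticeDist_pos {m : ℤ × ℤ} (hm : m ≠ 0) : 0 < latticeDist m :=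
  lt_of_lt_of_le one_pos (one_le_latticeDist hm)

/-- Triangle inequality. -/
lemma latticeDist_triangle (k m : ℤ × ℤ) :
    latticeDist k ≤ latticeDist m + latticeDist (k - m) := by
  unfold latticeDist
  have h1 : |2 * π * (k.1 : ℝ)| ≤ |2 * π * (m.1 : ℝ)| + |2 * π * ((k - m).1 : ℝ)| := by
    have : (2 * π * (k.1 : ℝ)) = 2 * π * (m.1 : ℝ) + 2 * π * ((k - m).1 : ℝ) := by
      simp only [Prod.fst_sub]; push_cast; ring
    rw [this]; exact abs_add_le _ _
  have h2 : |2 * π * (k.2 : ℝ)| ^ ((2:ℝ)/3)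
      ≤ |2 * π * (m.2 : ℝ)| ^ ((2:ℝ)/3) + |2 * π * ((k - m).2 : ℝ)| ^ ((2:ℝ)/3) := by
    have he : (2 * π * (k.2 : ℝ)) = 2 * π * (m.2 : ℝ) + 2 * π * ((k - m).2 : ℝ) := by
      simp only [Prod.snd_sub]; push_cast; ring
    have hle : |2 * π * (k.2 : ℝ)| ≤ |2 * π * (m.2 : ℝ)| + |2 * π * ((k - m).2 : ℝ)| := by
      rw [he]; exact abs_add_le _ _
    calc |2 * π * (k.2 : ℝ)| ^ ((2:ℝ)/3)
        ≤ (|2 * π * (m.2 : ℝ)| + |2 * π * ((k - m).2 : ℝ)|) ^ ((2:ℝ)/3) :=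
          Real.rpow_le_rpow (abs_nonneg _) hle (by norm_num)
      _ ≤ _ := rpow_two_thirds_add_le (abs_nonneg _) (abs_nonneg _)
  linarith

/-- Weighted AM–GM style estimate for `x, y ≥ 1`. -/
lemma rpow_mul_rpow_le {x y θ : ℝ} (hx : 1 ≤ x) (hy : 1 ≤ y) (hθ : 0 ≤ θ) (hθ' : θ ≤ 1) :
    x ^ θ * y ^ (1 - θ) ≤ x + y - 1 := by
  set M := max x y with hM
  have hxM : x ≤ M := le_max_left _ _
  have hyM : y ≤ M := le_max_right _ _
  have hM1 : 1 ≤ M := le_trans hx hxM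
  have hMpos : 0 < M := lt_of_lt_of_le one_pos hM1
  have h1 : x ^ θ ≤ M ^ θ := Real.rpow_le_rpow (le_trans zero_le_one hx) hxM hθ
  have h2 : y ^ (1 - θ) ≤ M ^ (1 - θ) := Real.rpow_le_rpow (le_trans zero_le_one hy) hyM (by linarith)
  have hprod : x ^ θ * y ^ (1 - θ) ≤ M ^ θ * M ^ (1 - θ) :=
    mul_le_mul h1 h2 (Real.rpow_nonneg (le_trans zero_le_one hy) _)
      (Real.rpow_nonneg (le_of_lt hMpos) _)
  have hMM : M ^ θ * M ^ (1 - θ) = M := by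
    rw [← Real.rpow_add hMpos]; simp
  rw [hMM] at hprod
  have : M ≤ x + y - 1 := by
    rcases max_cases x y with ⟨h, _⟩ | ⟨h, _⟩ <;> rw [← hM] at * <;> simp [h] <;> linarith
  linarith

/-- One-dimensional summability of `n ↦ (1 + |n|)^(-p)` for `p > 1`. -/
lemma summable_one_add_abs_rpow {p : ℝ} (hp : 1 < p) :
    Summable (fun n : ℤ => ((1:ℝ) + |(n:ℝ)|) ^ (-p)) := by
  have h0 : Summable (fun n : ℤ => |(n:ℝ)| ^ (-p)) := summable_abs_int_rpow hp
  have he : Summable (fun n : ℤ => if n = 0 then (1:ℝ) else 0) := by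
    apply summable_of_ne_finset_zero (s := {0})
    intro n hn
    simp only [Finset.mem_singleton] at hn
    simp [hn]
  refine Summable.of_nonneg_of_le (fun n => Real.rpow_nonneg (by positivity) _)
    (fun n => ?_) (h0.add he)
  rcases eq_or_ne n 0 with rfl | hn
  · have e1 : ((1:ℝ) + |((0:ℤ):ℝ)|) ^ (-p) = 1 := by norm_num
    have e2 : |((0:ℤ):ℝ)| ^ (-p) = 0 := by
      rw [show |((0:ℤ):ℝ)| = 0 by norm_num]
      exact Real.zero_rpow (by linarith)
    rw [e1, e2]
    norm_num
  · have h1 : (1:ℝ) ≤ |(n:ℝ)| := by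
      have := Int.one_le_abs hn
      exact_mod_cast (by exact_mod_cast this : (1:ℤ) ≤ |n|)
    have hpos : (0:ℝ) < |(n:ℝ)| := lt_of_lt_of_le one_pos h1
    have : ((1:ℝ) + |(n:ℝ)|) ^ (-p) ≤ |(n:ℝ)| ^ (-p) := by
      rw [Real.rpow_neg (by positivity), Real.rpow_neg (le_of_lt hpos)]
      apply inv_anti₀ (Real.rpow_pos_of_pos hpos _)
      exact Real.rpow_le_rpow (le_of_lt hpos) (by linarith) (by linarith)
    simp only [hn, if_false, add_zero]
    exact this

/-- The key pointwise bound giving summability. -/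
lemma cube_inv_le {m : ℤ × ℤ} (hm : m ≠ 0) :
    (latticeDist m ^ 3)⁻¹
      ≤ 8 * (((1:ℝ) + |(m.1:ℝ)|) ^ (-(5/4 : ℝ)) * ((1:ℝ) + |(m.2:ℝ)|) ^ (-(7/6 : ℝ))) := by
  set a : ℝ := |(m.1:ℝ)| with ha
  set b : ℝ := |(m.2:ℝ)| with hb
  have ha0 : 0 ≤ a := abs_nonneg _
  have hb0 : 0 ≤ b := abs_nonneg _
  have hpi : (1:ℝ) ≤ 2 * π := by nlinarith [Real.pi_gt_three]
  -- Step 1 : latticeDist m ≥ a + b^{2/3}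
  have step1 : a + b ^ ((2:ℝ)/3) ≤ latticeDist m := by
    unfold latticeDist
    have e1 : |2 * π * (m.1:ℝ)| = 2 * π * a := by
      rw [ha, abs_mul, abs_of_pos (by positivity : (0:ℝ) < 2 * π)]
    have e2 : |2 * π * (m.2:ℝ)| = 2 * π * b := by
      rw [hb, abs_mul, abs_of_pos (by positivity : (0:ℝ) < 2 * π)]
    rw [e1, e2]
    have g1 : a ≤ 2 * π * a := by nlinarith
    have g2 : b ^ ((2:ℝ)/3) ≤ (2 * π * b) ^ ((2:ℝ)/3) :=
      Real.rpow_le_rpow hb0 (by nlinarith) (by norm_num)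
    linarith
  -- a + b ≥ 1 since m ≠ 0, hence a + b^{2/3} ≥ 1
  have hab1 : 1 ≤ a + b ^ ((2:ℝ)/3) := by
    rcases eq_or_ne m.1 0 with h1 | h1
    · have h2 : m.2 ≠ 0 := fun h2 => hm (Prod.ext h1 h2)
      have : (1:ℝ) ≤ b := by
        have := Int.one_le_abs h2
        rw [hb]
        exact_mod_cast (by exact_mod_cast this : (1:ℤ) ≤ |m.2|)
      have : (1:ℝ) ≤ b ^ ((2:ℝ)/3) := by
        calc (1:ℝ) = 1 ^ ((2:ℝ)/3) := (Real.one_rpow _).symm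
          _ ≤ b ^ ((2:ℝ)/3) := Real.rpow_le_rpow (by norm_num) this (by norm_num)
      linarith
    · have : (1:ℝ) ≤ a := by
        have := Int.one_le_abs h1
        rw [ha]
        exact_mod_cast (by exact_mod_cast this : (1:ℤ) ≤ |m.1|)
      have hbp : 0 ≤ b ^ ((2:ℝ)/3) := Real.rpow_nonneg hb0 _
      linarith
  -- Step 2 : a + b^{2/3} ≥ (1/2) (1+a)^{5/12} (1+b^{2/3})^{7/12}
  have step2 : (1/2 : ℝ) * ((1 + a) ^ ((5:ℝ)/12) * (1 + b ^ ((2:ℝ)/3)) ^ ((7:ℝ)/12))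
      ≤ a + b ^ ((2:ℝ)/3) := by
    have h := rpow_mul_rpow_le (x := 1 + a) (y := 1 + b ^ ((2:ℝ)/3)) (θ := (5:ℝ)/12)
      (by linarith) (by nlinarith [Real.rpow_nonneg hb0 ((2:ℝ)/3)]) (by norm_num) (by norm_num)
    have h712 : (1 : ℝ) - (5:ℝ)/12 = (7:ℝ)/12 := by norm_num
    rw [h712] at h
    -- h : (1+a)^{5/12} (1+b^{2/3})^{7/12} ≤ 1 + a + b^{2/3}
    nlinarith [hab1]
  -- Step 3 : (1+b^{2/3})^{7/12} ≥ (1+b)^{7/18}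
  have step3 : (1 + b) ^ ((7:ℝ)/18) ≤ (1 + b ^ ((2:ℝ)/3)) ^ ((7:ℝ)/12) := by
    have hsub : (1 + b) ^ ((2:ℝ)/3) ≤ 1 + b ^ ((2:ℝ)/3) := by
      have := rpow_two_thirds_add_le (x := 1) (y := b) (by norm_num) hb0
      simpa [Real.one_rpow] using this
    calc (1 + b) ^ ((7:ℝ)/18) = ((1 + b) ^ ((2:ℝ)/3)) ^ ((7:ℝ)/12) := by
          rw [← Real.rpow_mul (by linarith)]; norm_num
      _ ≤ (1 + b ^ ((2:ℝ)/3)) ^ ((7:ℝ)/12) :=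
          Real.rpow_le_rpow (Real.rpow_nonneg (by linarith) _) hsub (by norm_num)
  -- combine : latticeDist m ≥ (1/2)(1+a)^{5/12}(1+b)^{7/18}
  have hcomb : (1/2 : ℝ) * ((1 + a) ^ ((5:ℝ)/12) * (1 + b) ^ ((7:ℝ)/18)) ≤ latticeDist m := by
    have h1 : (0:ℝ) ≤ (1 + a) ^ ((5:ℝ)/12) := Real.rpow_nonneg (by linarith) _
    have := mul_le_mul_of_nonneg_left step3 h1
    nlinarith [step1, step2]
  -- cube
  have hX0 : (0:ℝ) ≤ (1 + a) ^ ((5:ℝ)/12) * (1 + b) ^ ((7:ℝ)/18) :=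
    mul_nonneg (Real.rpow_nonneg (by linarith) _) (Real.rpow_nonneg (by linarith) _)
  have hcube : (1/8 : ℝ) * ((1 + a) ^ ((5:ℝ)/4) * (1 + b) ^ ((7:ℝ)/6)) ≤ latticeDist m ^ 3 := by
    have h3 : ((1/2 : ℝ) * ((1 + a) ^ ((5:ℝ)/12) * (1 + b) ^ ((7:ℝ)/18))) ^ 3
        ≤ latticeDist m ^ 3 := by
      apply pow_le_pow_left₀ (by positivity) hcomb
    have e : ((1/2 : ℝ) * ((1 + a) ^ ((5:ℝ)/12) * (1 + b) ^ ((7:ℝ)/18))) ^ 3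
        = (1/8 : ℝ) * ((1 + a) ^ ((5:ℝ)/4) * (1 + b) ^ ((7:ℝ)/6)) := by
      rw [mul_pow, mul_pow]
      rw [← Real.rpow_natCast ((1 + a) ^ ((5:ℝ)/12)) 3, ← Real.rpow_natCast ((1 + b) ^ ((7:ℝ)/18)) 3]
      rw [← Real.rpow_mul (by linarith), ← Real.rpow_mul (by linarith)]
      norm_num
    rw [e] at h3
    exact h3
  -- invert
  have hdpos : 0 < latticeDist m := latticeDist_pos hm
  have hlhs0 : (0:ℝ) < (1/8 : ℝ) * ((1 + a) ^ ((5:ℝ)/4) * (1 + b) ^ ((7:ℝ)/6)) := by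
    have := Real.rpow_pos_of_pos (show (0:ℝ) < 1 + a by linarith) ((5:ℝ)/4)
    have := Real.rpow_pos_of_pos (show (0:ℝ) < 1 + b by linarith) ((7:ℝ)/6)
    positivity
  have := inv_anti₀ hlhs0 hcube
  rw [Real.rpow_neg (by linarith : (0:ℝ) ≤ 1 + a), Real.rpow_neg (by linarith : (0:ℝ) ≤ 1 + b)]
  calc (latticeDist m ^ 3)⁻¹
      ≤ ((1/8 : ℝ) * ((1 + a) ^ ((5:ℝ)/4) * (1 + b) ^ ((7:ℝ)/6)))⁻¹ := this
    _ = 8 * (((1 + a) ^ ((5:ℝ)/4))⁻¹ * ((1 + b) ^ ((7:ℝ)/6))⁻¹) := by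
        rw [mul_inv, mul_inv]; norm_num

/-- Summability of the cube-inverse lattice sum. -/
lemma summable_F :
    Summable (fun m : ℤ × ℤ => if m ≠ 0 then (latticeDist m ^ 3)⁻¹ else 0) := by
  have h1 : Summable (fun n : ℤ => ((1:ℝ) + |(n:ℝ)|) ^ (-(5/4 : ℝ))) :=
    summable_one_add_abs_rpow (by norm_num)
  have h2 : Summable (fun n : ℤ => ((1:ℝ) + |(n:ℝ)|) ^ (-(7/6 : ℝ))) :=
    summable_one_add_abs_rpow (by norm_num)
  have hG : Summable (fun m : ℤ × ℤ =>
      ((1:ℝ) + |(m.1:ℝ)|) ^ (-(5/4 : ℝ)) * ((1:ℝ) + |(m.2:ℝ)|) ^ (-(7/6 : ℝ))) :=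
    h1.mul_of_nonneg h2 (fun n => Real.rpow_nonneg (by positivity) _)
      (fun n => Real.rpow_nonneg (by positivity) _)
  refine Summable.of_nonneg_of_le (fun m => ?_) (fun m => ?_) (hG.mul_left 8)
  · by_cases hm : m ≠ 0
    · rw [if_pos hm]
      exact inv_nonneg.mpr (pow_nonneg (latticeDist_nonneg m) 3)
    · rw [if_neg hm]
  · by_cases hm : m ≠ 0
    · rw [if_pos hm]
      exact cube_inv_le hm
    · rw [if_neg hm]
      have : (0:ℝ) ≤ ((1:ℝ) + |(m.1:ℝ)|) ^ (-(5/4 : ℝ)) * ((1:ℝ) + |(m.2:ℝ)|) ^ (-(7/6 : ℝ)) :=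
        mul_nonneg (Real.rpow_nonneg (by positivity) _) (Real.rpow_nonneg (by positivity) _)
      positivity

end LatticeAux

open LatticeAux

/-- Convolution estimate: for nonzero `k ∈ (2πℤ)²`,
`∑_{k'+k''=k, k',k''≠0} d(k',0)⁻⁴ d(k'',0)⁻¹ ≤ C·d(k,0)⁻¹`. -/
theorem lattice_convolution_bound_41 :
    ∃ C : ℝ, 0 < C ∧ ∀ k : ℤ × ℤ, k ≠ 0 →
      Summable (fun m : ℤ × ℤ =>
        if m ≠ 0 ∧ m ≠ k then
          (latticeDist m ^ 4)⁻¹ * (latticeDist (k - m))⁻¹ else 0) ∧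
      (∑' m : ℤ × ℤ,
          if m ≠ 0 ∧ m ≠ k then
            (latticeDist m ^ 4)⁻¹ * (latticeDist (k - m))⁻¹ else 0)
        ≤ C * (latticeDist k)⁻¹ := by
  set F : ℤ × ℤ → ℝ := fun m => if m ≠ 0 then (latticeDist m ^ 3)⁻¹ else 0 with hF
  have hFsum : Summable F := summable_F
  have hFnn : ∀ m, 0 ≤ F m := by
    intro m; rw [hF]
    show 0 ≤ if m ≠ 0 then (latticeDist m ^ 3)⁻¹ else 0
    by_cases hm : m ≠ 0
    · rw [if_pos hm]
      exact inv_nonneg.mpr (pow_nonneg (latticeDist_nonneg m) 3)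
    · rw [if_neg hm]
  set S : ℝ := ∑' m, F m with hS
  have hS0 : 0 ≤ S := tsum_nonneg hFnn
  refine ⟨4 * S + 1, by linarith, fun k hk => ?_⟩
  have hdk : 1 ≤ latticeDist k := one_le_latticeDist hk
  have hdk0 : 0 < latticeDist k := lt_of_lt_of_le one_pos hdk
  -- pointwise bound
  have key : ∀ m : ℤ × ℤ,
      (if m ≠ 0 ∧ m ≠ k then (latticeDist m ^ 4)⁻¹ * (latticeDist (k - m))⁻¹ else 0)
        ≤ 4 * (latticeDist k)⁻¹ * F m := by
    intro m
    by_cases hm : m ≠ 0 ∧ m ≠ k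
    · rw [if_pos hm]
      obtain ⟨hm0, hmk⟩ := hm
      have hkm0 : k - m ≠ 0 := sub_ne_zero.mpr (Ne.symm hmk)
      have hdm : 1 ≤ latticeDist m := one_le_latticeDist hm0
      have hdm0 : 0 < latticeDist m := lt_of_lt_of_le one_pos hdm
      have hdkm : 1 ≤ latticeDist (k - m) := one_le_latticeDist hkm0
      have hdkm0 : 0 < latticeDist (k - m) := lt_of_lt_of_le one_pos hdkm
      have htri : latticeDist k ≤ latticeDist m + latticeDist (k - m) :=
        latticeDist_triangle k m
      rw [hF]
      show _ ≤ 4 * (latticeDist k)⁻¹ * (if m ≠ 0 then (latticeDist m ^ 3)⁻¹ else 0)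
      rw [if_pos hm0]
      -- reduce to : latticeDist k * latticeDist m ^ 3 ≤ 4 * (latticeDist m ^ 4 * latticeDist (k-m))
      set u := latticeDist m
      set v := latticeDist (k - m)
      set w := latticeDist k
      have goal : w * u ^ 3 ≤ 4 * (u ^ 4 * v) := by
        rcases le_or_gt (w / 2) v with hc | hc
        · nlinarith [pow_pos hdm0 3, pow_pos hdm0 4, mul_pos (pow_pos hdm0 3) hdkm0,
            mul_le_mul_of_nonneg_left hc (le_of_lt (mul_pos (pow_pos hdm0 3) (by linarith : (0:ℝ) < 4))),
            pow_le_pow_right₀ hdm (by norm_num : (3:ℕ) ≤ 4)]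
        · have hu : w / 2 ≤ u := by linarith
          nlinarith [pow_pos hdm0 3, mul_le_mul_of_nonneg_left hu (le_of_lt (pow_pos hdm0 3)),
            mul_le_mul_of_nonneg_left hdkm (le_of_lt (mul_pos (pow_pos hdm0 3) hdm0))]
      -- turn goal into the inverse form
      have h1 : (u ^ 4)⁻¹ * v⁻¹ = (u ^ 4 * v)⁻¹ := (mul_inv _ _).symm
      have h2 : 4 * w⁻¹ * (u ^ 3)⁻¹ = ((w * u ^ 3) / 4)⁻¹ := by
        rw [div_eq_mul_inv, mul_inv, mul_inv]
        ring
      rw [h1, h2]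
      apply inv_anti₀
      · positivity
      · linarith
    · rw [if_neg hm]
      exact mul_nonneg (mul_nonneg (by norm_num) (le_of_lt (inv_pos.mpr hdk0))) (hFnn m)
  have hTnn : ∀ m : ℤ × ℤ,
      0 ≤ (if m ≠ 0 ∧ m ≠ k then (latticeDist m ^ 4)⁻¹ * (latticeDist (k - m))⁻¹ else 0) := by
    intro m
    by_cases hm : m ≠ 0 ∧ m ≠ k
    · rw [if_pos hm]
      exact mul_nonneg (inv_nonneg.mpr (pow_nonneg (latticeDist_nonneg m) 4))
        (inv_nonneg.mpr (latticeDist_nonneg (k - m)))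
    · rw [if_neg hm]
  have hbound : Summable (fun m : ℤ × ℤ => 4 * (latticeDist k)⁻¹ * F m) :=
    hFsum.mul_left _
  have hTsum : Summable (fun m : ℤ × ℤ =>
      if m ≠ 0 ∧ m ≠ k then (latticeDist m ^ 4)⁻¹ * (latticeDist (k - m))⁻¹ else 0) :=
    Summable.of_nonneg_of_le hTnn key hbound
  refine ⟨hTsum, ?_⟩
  calc (∑' m : ℤ × ℤ, if m ≠ 0 ∧ m ≠ k then
          (latticeDist m ^ 4)⁻¹ * (latticeDist (k - m))⁻¹ else 0)
      ≤ ∑' m : ℤ × ℤ, 4 * (latticeDist k)⁻¹ * F m := Summable.tsum_le_tsum key hTsum hbound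
    _ = 4 * (latticeDist k)⁻¹ * S := by rw [tsum_mul_left, hS]
    _ = (4 * S) * (latticeDist k)⁻¹ := by ring
    _ ≤ (4 * S + 1) * (latticeDist k)⁻¹ := by
        apply mul_le_mul_of_nonneg_right (by linarith) (le_of_lt (inv_pos.mpr hdk0))
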